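/- For smooth compactly supported local sections, the operators $K_r$ and $-L_{r+1}$ are formally adjoint with respect to the pairing $\langle \mu,\nu\rangle = \int \mu\,\overline{\nu}\,\lambda^2\,dx\,dy$: that is, $\int (K_r\mu)\,\overline{\nu}\,\lambda^2 = -\int \mu\,\overline{L_{r+1}\nu}\,\lambda^2$ for all smooth $\mu$ (type $r$) and $\nu$ (type $r+1$) with $\mu\overline{\nu}$ compactly supported in $U$. -/

import Mathlib

open Complex MeasureTheory Set

/-- Wirtinger derivative `∂/∂z`. -/
noncomputable def dZ (f : ℂ → ℂ) (z : ℂ) : ℂ :=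
  (fderiv ℝ f z 1 - Complex.I * fderiv ℝ f z Complex.I) / 2

/-- Wirtinger derivative `∂/∂z̄`. -/
noncomputable def dZbar (f : ℂ → ℂ) (z : ℂ) : ℂ :=
  (fderiv ℝ f z 1 + Complex.I * fderiv ℝ f z Complex.I) / 2

/-- `K_r f = λ^{r-1} ∂_z (λ^{-r} f)`. -/
noncomputable def Kop (lam : ℂ → ℝ) (r : ℤ) (f : ℂ → ℂ) (z : ℂ) : ℂ :=
  (lam z : ℂ) ^ (r - 1) * dZ (fun w => (lam w : ℂ) ^ (-r) * f w) z

/-- `L_r f = λ^{-r-1} ∂_z̄ (λ^{r} f)`. -/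
noncomputable def Lop (lam : ℂ → ℝ) (r : ℤ) (f : ℂ → ℂ) (z : ℂ) : ℂ :=
  (lam z : ℂ) ^ (-r - 1) * dZbar (fun w => (lam w : ℂ) ^ r * f w) z

/-- Constant curvature `-1`: `4 ∂_z ∂_z̄ log λ = λ²` on `U`. -/
def CurvMinusOne (lam : ℂ → ℝ) (U : Set ℂ) : Prop :=
  ∀ z ∈ U, 4 * dZ (fun w => dZbar (fun u => (Real.log (lam u) : ℂ)) w) z = (lam z : ℂ) ^ 2

lemma oneD (f : ℝ → ℂ) (hf : ContDiff ℝ 1 f) (h2f : HasCompactSupport f) :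
    ∫ x : ℝ, deriv f x = 0 := by
  have hint : Integrable (deriv f) :=
    (hf.continuous_deriv le_rfl).integrable_of_hasCompactSupport h2f.deriv
  rw [← intervalIntegral.integral_Iic_add_Ioi (b := (0:ℝ)) hint.integrableOn hint.integrableOn,
    h2f.integral_Iic_deriv_eq hf 0, h2f.integral_Ioi_deriv_eq hf 0]
  ring

lemma line_int (G : ℂ → ℂ) (hG : ContDiff ℝ 1 G) (h2G : HasCompactSupport G)
    (v z₀ : ℂ) (hv : v ≠ 0) : ∫ t : ℝ, fderiv ℝ G ((t : ℂ) * v + z₀) v = 0 := by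
  set φ : ℝ → ℂ := fun t => (t : ℂ) * v + z₀ with hφ
  have hφd : ∀ t : ℝ, HasDerivAt φ v t := by
    intro t
    simpa [hφ] using ((Complex.ofRealCLM.hasDerivAt (x := t)).mul_const v).add_const z₀
  have hd : ∀ t : ℝ, HasDerivAt (G ∘ φ) (fderiv ℝ G (φ t) v) t := by
    intro t
    exact ((hG.differentiable one_ne_zero (φ t)).hasFDerivAt).comp_hasDerivAt t (hφd t)
  have hφc : ContDiff ℝ 1 φ :=
    (Complex.ofRealCLM.contDiff.mul contDiff_const).add contDiff_const
  have hfc : ContDiff ℝ 1 (G ∘ φ) := hG.comp hφc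
  have hsupp : HasCompactSupport (G ∘ φ) := by
    obtain ⟨R, hR⟩ := h2G.isBounded.subset_closedBall 0
    apply HasCompactSupport.of_support_subset_isCompact
      (isCompact_Icc (a := -((R + ‖z₀‖)/‖v‖)) (b := (R + ‖z₀‖)/‖v‖))
    intro t ht
    have hmem : φ t ∈ tsupport G := subset_tsupport G (by simpa [Function.comp] using ht)
    have h1 : ‖φ t‖ ≤ R := by simpa using hR hmem
    have h2 : ‖(t:ℂ) * v‖ ≤ R + ‖z₀‖ := by
      have h4 : ‖(t:ℂ)*v‖ ≤ ‖(t:ℂ)*v + z₀‖ + ‖z₀‖ := by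
        simpa using norm_sub_le ((t:ℂ)*v + z₀) z₀
      simp only [hφ] at h1
      linarith
    have h3 : |t| * ‖v‖ ≤ R + ‖z₀‖ := by simpa [norm_mul] using h2
    have hv' : 0 < ‖v‖ := norm_pos_iff.mpr hv
    have : |t| ≤ (R + ‖z₀‖)/‖v‖ := (le_div_iff₀ hv').mpr h3
    exact abs_le.mp this |> fun ⟨h, h'⟩ => ⟨h, h'⟩
  have := oneD (G ∘ φ) hfc hsupp
  rw [← this]
  exact integral_congr_ae (Filter.Eventually.of_forall fun t => ((hd t).deriv).symm)

lemma planar_int (G : ℂ → ℂ) (hG : ContDiff ℝ 1 G) (h2G : HasCompactSupport G) (v : ℂ)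
    (hint : Integrable (fun z => fderiv ℝ G z v)) :
    ∫ z : ℂ, fderiv ℝ G z v = ∫ p : ℝ × ℝ, fderiv ℝ G ((p.1 : ℂ) + (p.2 : ℂ) * I) v := by
  rw [← (Complex.volume_preserving_equiv_real_prod.symm
      Complex.measurableEquivRealProd).integral_comp
      (Complex.measurableEquivRealProd.symm.measurableEmbedding) (fun z => fderiv ℝ G z v)]
  refine integral_congr_ae (Filter.Eventually.of_forall fun p => ?_)
  simp only [Complex.measurableEquivRealProd_symm_apply]
  have h : ({re := p.1, im := p.2} : ℂ) = (p.1 : ℂ) + (p.2 : ℂ) * I := by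
    apply Complex.ext <;> simp
  rw [h]

lemma dir_int (G : ℂ → ℂ) (hG : ContDiff ℝ 1 G) (h2G : HasCompactSupport G) (v : ℂ)
    (hv : v = 1 ∨ v = I) : ∫ z : ℂ, fderiv ℝ G z v = 0 := by
  have hcont : Continuous fun z => fderiv ℝ G z v :=
    (ContinuousLinearMap.apply ℝ ℂ v).continuous.comp (hG.continuous_fderiv one_ne_zero)
  have hcs : HasCompactSupport fun z => fderiv ℝ G z v :=
    HasCompactSupport.comp_left (g := fun L : ℂ →L[ℝ] ℂ => L v) (h2G.fderiv (𝕜 := ℝ)) (by simp)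
  have hint : Integrable (fun z => fderiv ℝ G z v) :=
    hcont.integrable_of_hasCompactSupport hcs
  rw [planar_int G hG h2G v hint]
  have hint2 : Integrable (fun p : ℝ × ℝ => fderiv ℝ G ((p.1 : ℂ) + (p.2 : ℂ) * I) v)
      ((volume : Measure ℝ).prod (volume : Measure ℝ)) := by
    rw [← Measure.volume_eq_prod]
    have := (Complex.volume_preserving_equiv_real_prod.symm
      Complex.measurableEquivRealProd).integrable_comp_emb
      (Complex.measurableEquivRealProd.symm.measurableEmbedding)
      (g := fun z => fderiv ℝ G z v)
    rw [← this] at hint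
    refine hint.congr (Filter.Eventually.of_forall fun p => ?_)
    simp only [Function.comp_apply, Complex.measurableEquivRealProd_symm_apply]
    have h : ({re := p.1, im := p.2} : ℂ) = (p.1 : ℂ) + (p.2 : ℂ) * I := by
      apply Complex.ext <;> simp
    rw [h]
  rcases hv with rfl | rfl
  · rw [Measure.volume_eq_prod, integral_prod_symm _ hint2]
    have : ∀ y : ℝ, (∫ x : ℝ, fderiv ℝ G ((x : ℂ) + (y : ℂ) * I) 1) = 0 := by
      intro y
      have := line_int G hG h2G 1 ((y:ℂ) * I) one_ne_zero
      rw [← this]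
      exact integral_congr_ae (Filter.Eventually.of_forall fun x => by norm_num)
    simp only [this, integral_zero]
  · rw [Measure.volume_eq_prod, integral_prod _ hint2]
    have : ∀ x : ℝ, (∫ y : ℝ, fderiv ℝ G ((x : ℂ) + (y : ℂ) * I) I) = 0 := by
      intro x
      have := line_int G hG h2G I ((x:ℂ)) I_ne_zero
      rw [← this]
      refine integral_congr_ae (Filter.Eventually.of_forall fun y => ?_)
      show (fderiv ℝ G ((x:ℂ) + (y:ℂ) * I)) I = (fderiv ℝ G ((y:ℂ) * I + (x:ℂ))) I
      rw [add_comm]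
    simp only [this, integral_zero]

lemma dZ_congr {f g : ℂ → ℂ} {z : ℂ} (h : f =ᶠ[nhds z] g) : dZ f z = dZ g z := by
  unfold dZ; rw [h.fderiv_eq]

lemma dZ_zero (z : ℂ) : dZ (fun _ => (0 : ℂ)) z = 0 := by
  simp [dZ, fderiv_const]

lemma dZ_mul {f g : ℂ → ℂ} {z : ℂ} (hf : DifferentiableAt ℝ f z)
    (hg : DifferentiableAt ℝ g z) :
    dZ (fun w => f w * g w) z = dZ f z * g z + f z * dZ g z := by
  unfold dZ
  rw [fderiv_fun_mul hf hg]
  simp only [ContinuousLinearMap.add_apply, ContinuousLinearMap.smul_apply, smul_eq_mul]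
  ring

lemma conj_dZbar {f : ℂ → ℂ} {z : ℂ} (hf : DifferentiableAt ℝ f z) :
    (starRingEnd ℂ) (dZbar f z) = dZ (fun w => (starRingEnd ℂ) (f w)) z := by
  have hcomp : fderiv ℝ (fun w => (starRingEnd ℂ) (f w)) z =
      (Complex.conjCLE.toContinuousLinearMap).comp (fderiv ℝ f z) := by
    have h1 : (fun w => (starRingEnd ℂ) (f w)) =
        (Complex.conjCLE.toContinuousLinearMap : ℂ → ℂ) ∘ f := rfl
    rw [h1, fderiv_comp z (Complex.conjCLE.toContinuousLinearMap.differentiableAt) hf,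
      ContinuousLinearMap.fderiv]
  unfold dZ dZbar
  rw [hcomp]
  simp only [ContinuousLinearMap.coe_comp', Function.comp_apply,
    ContinuousLinearEquiv.coe_coe]
  have he : ∀ w : ℂ, (Complex.conjCLE : ℂ ≃L[ℝ] ℂ) w = (starRingEnd ℂ) w := fun w => rfl
  rw [he, he, map_div₀, map_add, map_mul]
  simp only [Complex.conj_I, map_ofNat]
  ring

lemma dZ_int_zero (G : ℂ → ℂ) (hG : ContDiff ℝ 1 G) (h2G : HasCompactSupport G) :
    ∫ z : ℂ, dZ G z = 0 := by
  have hint : ∀ v : ℂ, Integrable (fun z => fderiv ℝ G z v) := by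
    intro v
    have hcont : Continuous fun z => fderiv ℝ G z v :=
      (hG.continuous_fderiv one_ne_zero).clm_apply continuous_const
    have hcs : HasCompactSupport fun z => fderiv ℝ G z v :=
      HasCompactSupport.comp_left (g := fun L : ℂ →L[ℝ] ℂ => L v)
        (h2G.fderiv (𝕜 := ℝ)) (by simp)
    exact hcont.integrable_of_hasCompactSupport hcs
  unfold dZ
  rw [integral_div, integral_sub (hint 1) ((hint I).const_mul I), integral_const_mul,
    dir_int G hG h2G 1 (Or.inl rfl), dir_int G hG h2G I (Or.inr rfl)]
  simp

lemma lam_pow_diff {lam : ℂ → ℝ} {U : Set ℂ} (hU : IsOpen U)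
    (hlam : ContDiffOn ℝ (⊤ : ℕ∞) lam U) (hpos : ∀ z ∈ U, 0 < lam z) (n : ℤ) {z : ℂ}
    (hz : z ∈ U) : DifferentiableAt ℝ (fun w => (lam w : ℂ) ^ n) z := by
  have hld : DifferentiableAt ℝ lam z :=
    (hlam.contDiffAt (hU.mem_nhds hz)).differentiableAt (by simp)
  have hne : lam z ≠ 0 := (hpos z hz).ne'
  have h1 : DifferentiableAt ℝ (fun w => lam w ^ n) z := hld.zpow (Or.inl hne)
  have h2 : (fun w => (lam w : ℂ) ^ n) = fun w => ((lam w ^ n : ℝ) : ℂ) := by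
    funext w; rw [Complex.ofReal_zpow]
  rw [h2]
  exact Complex.ofRealCLM.differentiableAt.comp z h1

/-- `K_r` and `-L_{r+1}` are formally adjoint for the pairing
`⟨f,g⟩ = ∫ f ḡ λ² dxdy`, for smooth `μ, ν` with `μ ν̄` compactly supported in `U`. -/
theorem formal_adjoint_K_L
    (U : Set ℂ) (hU : IsOpen U)
    (lam : ℂ → ℝ) (hlam : ContDiffOn ℝ (⊤ : ℕ∞) lam U) (hpos : ∀ z ∈ U, 0 < lam z)
    (r : ℤ) (μ ν : ℂ → ℂ) (hμ : ContDiffOn ℝ (⊤ : ℕ∞) μ U) (hν : ContDiffOn ℝ (⊤ : ℕ∞) ν U)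
    (hsupp : HasCompactSupport fun z => μ z * (starRingEnd ℂ) (ν z))
    (hsub : tsupport (fun z => μ z * (starRingEnd ℂ) (ν z)) ⊆ U) :
    ∫ z in U, Kop lam r μ z * (starRingEnd ℂ) (ν z) * ((lam z : ℂ)) ^ 2 =
      -∫ z in U, μ z * (starRingEnd ℂ) (Lop lam (r + 1) ν z) * ((lam z : ℂ)) ^ 2 := by
  classical
  set m : ℂ → ℂ := fun z => μ z * (starRingEnd ℂ) (ν z) with hm
  set a : ℂ → ℂ := fun w => (lam w : ℂ) ^ (-r) * μ w with ha
  set p : ℂ → ℂ := fun w => (lam w : ℂ) ^ (r + 1) * ν w with hp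
  set b : ℂ → ℂ := fun w => (lam w : ℂ) ^ (r + 1) * (starRingEnd ℂ) (ν w) with hb
  set G : ℂ → ℂ := fun w => (lam w : ℂ) * m w with hGdef
  -- basic differentiability facts
  have hμd : ∀ z ∈ U, DifferentiableAt ℝ μ z := fun z hz =>
    (hμ.contDiffAt (hU.mem_nhds hz)).differentiableAt (by simp)
  have hνd : ∀ z ∈ U, DifferentiableAt ℝ ν z := fun z hz =>
    (hν.contDiffAt (hU.mem_nhds hz)).differentiableAt (by simp)
  have hconjν : ∀ z ∈ U, DifferentiableAt ℝ (fun w => (starRingEnd ℂ) (ν w)) z := by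
    intro z hz
    exact (Complex.conjCLE.toContinuousLinearMap.differentiableAt).comp z (hνd z hz)
  have hlamn : ∀ (n : ℤ), ∀ z ∈ U, DifferentiableAt ℝ (fun w => (lam w : ℂ) ^ n) z :=
    fun n z hz => lam_pow_diff hU hlam hpos n hz
  have had : ∀ z ∈ U, DifferentiableAt ℝ a z := fun z hz =>
    ((hlamn (-r) z hz).mul (hμd z hz))
  have hbd : ∀ z ∈ U, DifferentiableAt ℝ b z := fun z hz =>
    ((hlamn (r+1) z hz).mul (hconjν z hz))
  have hpd : ∀ z ∈ U, DifferentiableAt ℝ p z := fun z hz =>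
    ((hlamn (r+1) z hz).mul (hνd z hz))
  have hnec : ∀ z ∈ U, (lam z : ℂ) ≠ 0 := fun z hz => by
    exact_mod_cast (hpos z hz).ne'
  -- key pointwise identities
  have key1 : Set.EqOn (fun z => Kop lam r μ z * (starRingEnd ℂ) (ν z) * ((lam z : ℂ)) ^ 2)
      (fun z => dZ a z * b z) U := by
    intro z hz
    have hne := hnec z hz
    have hKz : Kop lam r μ z = (lam z : ℂ) ^ (r - 1) * dZ a z := rfl
    have hpow : (lam z : ℂ) ^ (r - 1) * ((lam z : ℂ)) ^ (2 : ℕ) = (lam z : ℂ) ^ (r + 1) := by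
      rw [← zpow_natCast ((lam z : ℂ)) 2, ← zpow_add₀ hne]
      congr 1
      omega
    show Kop lam r μ z * (starRingEnd ℂ) (ν z) * ((lam z : ℂ)) ^ 2 = dZ a z * b z
    calc Kop lam r μ z * (starRingEnd ℂ) (ν z) * ((lam z : ℂ)) ^ 2
        = dZ a z * ((lam z : ℂ) ^ (r - 1) * ((lam z : ℂ)) ^ (2 : ℕ) * (starRingEnd ℂ) (ν z)) := by
          rw [hKz]; ring
      _ = dZ a z * b z := by rw [hpow]
  have key2 : Set.EqOn (fun z => μ z * (starRingEnd ℂ) (Lop lam (r + 1) ν z) * ((lam z : ℂ)) ^ 2)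
      (fun z => a z * dZ b z) U := by
    intro z hz
    have hne := hnec z hz
    have hLz : Lop lam (r + 1) ν z = (lam z : ℂ) ^ (-(r + 1) - 1) * dZbar p z := rfl
    have hconjpow : ∀ n : ℤ, (starRingEnd ℂ) ((lam z : ℂ) ^ n) = (lam z : ℂ) ^ n := fun n => by
      rw [← Complex.ofReal_zpow, Complex.conj_ofReal]
    have hpb : (fun w => (starRingEnd ℂ) (p w)) = b := by
      funext w
      show (starRingEnd ℂ) ((lam w : ℂ) ^ (r + 1) * ν w) = (lam w : ℂ) ^ (r + 1) * (starRingEnd ℂ) (ν w)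
      rw [map_mul, ← Complex.ofReal_zpow, Complex.conj_ofReal, Complex.ofReal_zpow]
    have hcdz : (starRingEnd ℂ) (dZbar p z) = dZ b z := by
      rw [conj_dZbar (hpd z hz), hpb]
    have hpow2 : (lam z : ℂ) ^ (-(r + 1) - 1) * ((lam z : ℂ)) ^ (2 : ℕ) = (lam z : ℂ) ^ (-r) := by
      rw [← zpow_natCast ((lam z : ℂ)) 2, ← zpow_add₀ hne]
      congr 1
      ring
    show μ z * (starRingEnd ℂ) (Lop lam (r + 1) ν z) * ((lam z : ℂ)) ^ 2 = a z * dZ b z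
    rw [hLz, map_mul, hconjpow, hcdz]
    calc μ z * ((lam z : ℂ) ^ (-(r + 1) - 1) * dZ b z) * ((lam z : ℂ)) ^ 2
        = ((lam z : ℂ) ^ (-(r + 1) - 1) * ((lam z : ℂ)) ^ (2 : ℕ)) * (μ z * dZ b z) := by ring
      _ = (lam z : ℂ) ^ (-r) * (μ z * dZ b z) := by rw [hpow2]
      _ = a z * dZ b z := by show _ = ((lam z : ℂ) ^ (-r) * μ z) * dZ b z; ring
  -- smoothness and support of G
  have hGsm : ContDiff ℝ 1 G := by
    rw [contDiff_iff_contDiffAt]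
    intro z
    by_cases hz : z ∈ U
    · have hlamAt : ContDiffAt ℝ 1 (fun w => (lam w : ℂ)) z :=
        (Complex.ofRealCLM.contDiff.contDiffAt).comp z
          ((hlam.contDiffAt (hU.mem_nhds hz)).of_le (by simp))
      have hμAt : ContDiffAt ℝ 1 μ z := (hμ.contDiffAt (hU.mem_nhds hz)).of_le (by simp)
      have hνAt : ContDiffAt ℝ 1 ν z := (hν.contDiffAt (hU.mem_nhds hz)).of_le (by simp)
      have hcνAt : ContDiffAt ℝ 1 (fun w => (starRingEnd ℂ) (ν w)) z :=
        (Complex.conjCLE.toContinuousLinearMap.contDiff.contDiffAt).comp z hνAt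
      exact hlamAt.mul (hμAt.mul hcνAt)
    · have hzt : z ∈ (tsupport m)ᶜ := fun hmem => hz (hsub hmem)
      have hopen : IsOpen (tsupport m)ᶜ := (isClosed_tsupport m).isOpen_compl
      have hev : G =ᶠ[nhds z] (fun _ => (0 : ℂ)) :=
        Filter.eventuallyEq_of_mem (hopen.mem_nhds hzt) (fun w hw => by
          show (lam w : ℂ) * m w = 0
          rw [image_eq_zero_of_notMem_tsupport hw, mul_zero])
      exact (contDiffAt_const (c := (0:ℂ))).congr_of_eventuallyEq hev
  have hGcs : HasCompactSupport G := by
    refine hsupp.mono ?_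
    intro w hw
    simp only [Function.mem_support] at hw ⊢
    intro hmw
    exact hw (by show (lam w : ℂ) * m w = 0; rw [hmw, mul_zero])
  have hGzero : ∀ z, z ∉ tsupport m → dZ G z = 0 := by
    intro z hz
    have hopen : IsOpen (tsupport m)ᶜ := (isClosed_tsupport m).isOpen_compl
    have hev : G =ᶠ[nhds z] (fun _ => (0 : ℂ)) :=
      Filter.eventuallyEq_of_mem (hopen.mem_nhds hz) (fun w hw => by
        show (lam w : ℂ) * m w = 0
        rw [image_eq_zero_of_notMem_tsupport hw, mul_zero])
    rw [dZ_congr hev, dZ_zero]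
  have key3 : Set.EqOn (fun z => dZ a z * b z + a z * dZ b z) (fun z => dZ G z) U := by
    intro z hz
    have hev : (fun w => a w * b w) =ᶠ[nhds z] G := by
      refine Filter.eventuallyEq_of_mem (hU.mem_nhds hz) (fun w hw => ?_)
      have hne := hnec w hw
      show a w * b w = (lam w : ℂ) * m w
      calc a w * b w
          = ((lam w : ℂ) ^ (-r) * (lam w : ℂ) ^ (r + 1)) * (μ w * (starRingEnd ℂ) (ν w)) := by
            show ((lam w : ℂ) ^ (-r) * μ w) * ((lam w : ℂ) ^ (r + 1) * (starRingEnd ℂ) (ν w)) = _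
            ring
        _ = (lam w : ℂ) * m w := by
            rw [← zpow_add₀ hne]
            have h1 : -r + (r + 1) = 1 := by ring
            rw [h1, zpow_one]
    show dZ a z * b z + a z * dZ b z = dZ G z
    rw [← dZ_mul (had z hz) (hbd z hz), dZ_congr hev]
  -- integrability of dZ G
  have hdZGc : Continuous (fun z => dZ G z) := by
    unfold dZ
    have c1 : Continuous fun z => fderiv ℝ G z 1 :=
      (hGsm.continuous_fderiv one_ne_zero).clm_apply continuous_const
    have cI : Continuous fun z => fderiv ℝ G z I :=
      (hGsm.continuous_fderiv one_ne_zero).clm_apply continuous_const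
    exact ((c1.sub (continuous_const.mul cI)).div_const 2)
  have hdZGcs : HasCompactSupport (fun z => dZ G z) :=
    HasCompactSupport.intro hsupp (fun x hx => hGzero x hx)
  have hdZGint : Integrable (fun z => dZ G z) :=
    hdZGc.integrable_of_hasCompactSupport hdZGcs
  have hIntdZG : IntegrableOn (fun z => dZ G z) U volume := hdZGint.integrableOn
  have hsum0 : ∫ z in U, (dZ a z * b z + a z * dZ b z) = 0 := by
    rw [setIntegral_congr_fun hU.measurableSet key3]
    rw [setIntegral_eq_integral_of_forall_compl_eq_zero
      (fun z hz => hGzero z (fun hmem => hz (hsub hmem)))]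
    exact dZ_int_zero G hGsm hGcs
  have hsumInt : IntegrableOn (fun z => dZ a z * b z + a z * dZ b z) U volume :=
    hIntdZG.congr_fun key3.symm hU.measurableSet
  rw [setIntegral_congr_fun hU.measurableSet key1, setIntegral_congr_fun hU.measurableSet key2]
  by_cases hf : IntegrableOn (fun z => dZ a z * b z) U volume
  · have hg : IntegrableOn (fun z => a z * dZ b z) U volume := by
      refine (hsumInt.sub hf).congr (Filter.Eventually.of_forall fun z => ?_)
      show (dZ a z * b z + a z * dZ b z) - dZ a z * b z = a z * dZ b z
      ring
    have hadd : (∫ z in U, dZ a z * b z) + (∫ z in U, a z * dZ b z) = 0 := by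
      rw [← integral_add hf hg]
      exact hsum0
    exact eq_neg_of_add_eq_zero_left hadd
  · have hg : ¬ IntegrableOn (fun z => a z * dZ b z) U volume := by
      intro hg
      apply hf
      refine (hsumInt.sub hg).congr (Filter.Eventually.of_forall fun z => ?_)
      show (dZ a z * b z + a z * dZ b z) - a z * dZ b z = dZ a z * b z
      ring
    rw [integral_undef hf, integral_undef hg, neg_zero]
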